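/- Let A ∈ (ℝ ∪ {−∞})^{m×n} be a row-regular matrix, let B ∈ (ℝ ∪ {−∞})^{m×n} be a column-regular matrix, let p ∈ (ℝ ∪ {−∞})^m be a nonzero vector, and let q ∈ ℝ^m be a regular vector. Then the minimum of q⁻ B x ⊗ (A x)⁻ p over all regular vectors x ∈ ℝⁿ equals Δ = (A (q⁻ B)⁻)⁻ p, and this minimum is attained at every vector x = α (q⁻ B)⁻ with α ∈ ℝ. -/

import Mathlib

/-!
Put `s = q⁻ B`, a regular row vector since `q` is regular and `B` column-regular. For regular `x`
the first factor is `c = q⁻ B x = s x ≥ s_j + x_j` for every `j`, so `x ≤ c s⁻`, hence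
`A x ≤ c A s⁻`; as `A` is row-regular both sides are regular, conjugation reverses the order and
`(A x)⁻ p ≥ c⁻ (A s⁻)⁻ p = c⁻ Δ`. At `x = α s⁻` both bounds are equalities: `s x = α` and
`(A x)⁻ p = α⁻ Δ`.
-/

open Finset

noncomputable section

namespace MaxPlus

/-- Max-plus multiplicative inverse: `-a` for real `a`, `⊥` for `⊥`. -/
def tinv (a : WithBot ℝ) : WithBot ℝ := WithBot.map (fun r => -r) a

/-- Max-plus rational power `a^(1/k) = a / k`. -/
def trt (a : WithBot ℝ) (k : ℕ) : WithBot ℝ := WithBot.map (fun r => r / (k : ℝ)) a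

/-- A vector is regular if it has no `⊥` (= -∞) entries. -/
def Reg {n : ℕ} (x : Fin n → WithBot ℝ) : Prop := ∀ i, x i ≠ ⊥

/-- `cdot q x = q⁻ x`, the max-plus product of the conjugate row vector `q⁻` with `x`. -/
def cdot {n : ℕ} (q x : Fin n → WithBot ℝ) : WithBot ℝ :=
  Finset.univ.sup fun i => tinv (q i) + x i

/-- Max-plus matrix-vector product. -/
def mulVec {m n : ℕ} (A : Matrix (Fin m) (Fin n) (WithBot ℝ)) (x : Fin n → WithBot ℝ) :
    Fin m → WithBot ℝ := fun i => Finset.univ.sup fun j => A i j + x j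

/-- Max-plus matrix product. -/
def tmul {l m n : ℕ} (A : Matrix (Fin l) (Fin m) (WithBot ℝ))
    (B : Matrix (Fin m) (Fin n) (WithBot ℝ)) : Matrix (Fin l) (Fin n) (WithBot ℝ) :=
  fun i j => Finset.univ.sup fun k => A i k + B k j

/-- Multiplicative conjugate transpose of a matrix. -/
def conjM {m n : ℕ} (A : Matrix (Fin m) (Fin n) (WithBot ℝ)) :
    Matrix (Fin n) (Fin m) (WithBot ℝ) := fun i j => tinv (A j i)

/-- Max-plus identity matrix. -/
def tId {n : ℕ} : Matrix (Fin n) (Fin n) (WithBot ℝ) := fun i j => if i = j then 0 else ⊥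

/-- Max-plus matrix power. -/
def tpow {n : ℕ} (A : Matrix (Fin n) (Fin n) (WithBot ℝ)) : ℕ → Matrix (Fin n) (Fin n) (WithBot ℝ)
  | 0 => tId
  | k + 1 => tmul A (tpow A k)

/-- Max-plus trace. -/
def ttr {n : ℕ} (A : Matrix (Fin n) (Fin n) (WithBot ℝ)) : WithBot ℝ :=
  Finset.univ.sup fun i => A i i

/-- `Tr(A) = tr A ⊕ tr A² ⊕ ⋯ ⊕ tr Aⁿ`. -/
def TrOp {n : ℕ} (A : Matrix (Fin n) (Fin n) (WithBot ℝ)) : WithBot ℝ :=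
  (Finset.Icc 1 n).sup fun m => ttr (tpow A m)

/-- Kleene star `A* = I ⊕ A ⊕ ⋯ ⊕ A^(n-1)`. -/
def kstar {n : ℕ} (A : Matrix (Fin n) (Fin n) (WithBot ℝ)) : Matrix (Fin n) (Fin n) (WithBot ℝ) :=
  fun i j => (Finset.range n).sup fun k => tpow A k i j

/-- Max-plus spectral radius `λ = ⊕_{m=1}^n (tr A^m)^(1/m)`. -/
def specRad {n : ℕ} (A : Matrix (Fin n) (Fin n) (WithBot ℝ)) : WithBot ℝ :=
  (Finset.Icc 1 n).sup fun m => trt (ttr (tpow A m)) m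

/-- `prodAB A B [i₁, …, i_k] = A B^{i₁} A B^{i₂} ⋯ A B^{i_k}`. -/
def prodAB {n : ℕ} (A B : Matrix (Fin n) (Fin n) (WithBot ℝ)) :
    List ℕ → Matrix (Fin n) (Fin n) (WithBot ℝ)
  | [] => tId
  | i :: t => tmul (tmul A (tpow B i)) (prodAB A B t)

/-- The all-ones (all-`𝟙 = 0`) vector. -/
def onesV (n : ℕ) : Fin n → WithBot ℝ := fun _ => 0

end MaxPlus

namespace MaxPlus

theorem tinv_coe (r : ℝ) : tinv r = ((-r : ℝ) : WithBot ℝ) := rfl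

theorem tinv_ne_bot {a : WithBot ℝ} (ha : a ≠ ⊥) : tinv a ≠ ⊥ := by
  lift a to ℝ using ha
  exact WithBot.coe_ne_bot

theorem tinv_add (a b : WithBot ℝ) : tinv (a + b) = tinv a + tinv b := by
  induction a using WithBot.recBotCoe <;> induction b using WithBot.recBotCoe
  all_goals first | rfl | (simp only [tinv_coe, ← WithBot.coe_add]; congr 1; ring)

theorem add_tinv_self {a : WithBot ℝ} (ha : a ≠ ⊥) : a + tinv a = 0 := by
  lift a to ℝ using ha
  rw [tinv_coe, ← WithBot.coe_add, add_neg_cancel, WithBot.coe_zero]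

theorem le_add_tinv_iff {a x c : WithBot ℝ} (ha : a ≠ ⊥) : x ≤ c + tinv a ↔ x + a ≤ c := by
  constructor
  · intro h
    calc x + a ≤ c + tinv a + a := add_le_add_left h a
      _ = c := by rw [add_assoc, add_comm (tinv a), add_tinv_self ha, add_zero]
  · intro h
    calc x = x + a + tinv a := by rw [add_assoc, add_tinv_self ha, add_zero]
      _ ≤ c + tinv a := add_le_add_left h _

theorem tinv_le_add_tinv {u v c : WithBot ℝ} (hu : u ≠ ⊥) (hv : v ≠ ⊥) (h : u ≤ c + v) :
    tinv v ≤ c + tinv u := by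
  rw [le_add_tinv_iff hu]
  calc tinv v + u ≤ tinv v + (c + v) := add_le_add_right h _
    _ = c := by rw [add_comm c, ← add_assoc, add_comm (tinv v), add_tinv_self hv, zero_add]

theorem add_finsetSup {ι : Type*} (s : Finset ι) (c : WithBot ℝ) (f : ι → WithBot ℝ) :
    c + s.sup f = s.sup fun i => c + f i :=
  Finset.apply_sup_eq_sup_comp_of_linearOrder (c + ·) (fun _ _ h => add_le_add_right h c)
    (WithBot.add_bot c)

def dot {n : ℕ} (u x : Fin n → WithBot ℝ) : WithBot ℝ :=
  univ.sup fun j => u j + x j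

/-- The row vector `q⁻ B`. -/
def cdotMat {m n : ℕ} (q : Fin m → WithBot ℝ) (B : Matrix (Fin m) (Fin n) (WithBot ℝ)) :
    Fin n → WithBot ℝ :=
  fun j => cdot q fun i => B i j

section Vectors

variable {m n : ℕ}

theorem add_le_dot (u x : Fin n → WithBot ℝ) (j : Fin n) : u j + x j ≤ dot u x :=
  le_sup (f := fun j => u j + x j) (mem_univ j)

theorem dot_ne_bot {u x : Fin n → WithBot ℝ} (j : Fin n) (hu : u j ≠ ⊥) (hx : x j ≠ ⊥) :
    dot u x ≠ ⊥ :=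
  ne_bot_of_le_ne_bot (WithBot.add_ne_bot.2 ⟨hu, hx⟩) (add_le_dot u x j)

theorem dot_mono (u : Fin n → WithBot ℝ) {x y : Fin n → WithBot ℝ} (h : x ≤ y) :
    dot u x ≤ dot u y :=
  sup_mono_fun fun j _ => add_le_add_right (h j) _

theorem dot_const_add (u x : Fin n → WithBot ℝ) (c : WithBot ℝ) :
    dot u (fun j => c + x j) = c + dot u x := by
  simp only [dot, add_finsetSup, add_left_comm c]

theorem le_dot_add_tinv {u : Fin n → WithBot ℝ} (hu : Reg u) (x : Fin n → WithBot ℝ)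
    (j : Fin n) : x j ≤ dot u x + tinv (u j) :=
  (le_add_tinv_iff (hu j)).2 (add_comm (x j) (u j) ▸ add_le_dot u x j)

theorem dot_const_add_tinv [Nonempty (Fin n)] {u : Fin n → WithBot ℝ} (hu : Reg u)
    (c : WithBot ℝ) : dot u (fun j => c + tinv (u j)) = c := by
  simp only [dot, add_left_comm (u _), add_tinv_self (hu _), add_zero]
  exact sup_const univ_nonempty c

theorem cdot_mulVec (q : Fin m → WithBot ℝ) (B : Matrix (Fin m) (Fin n) (WithBot ℝ))
    (x : Fin n → WithBot ℝ) : cdot q (mulVec B x) = dot (cdotMat q B) x := by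
  simp only [cdot, mulVec, cdotMat, dot, add_finsetSup]
  rw [Finset.sup_comm]
  refine congrArg _ (funext fun j => ?_)
  rw [add_comm _ (x j), add_finsetSup]
  simp only [add_left_comm (x j), add_comm (x j)]

theorem reg_mulVec {A : Matrix (Fin m) (Fin n) (WithBot ℝ)} (hA : ∀ i, ∃ j, A i j ≠ ⊥)
    {x : Fin n → WithBot ℝ} (hx : Reg x) : Reg (mulVec A x) := fun i =>
  have ⟨j, hj⟩ := hA i
  dot_ne_bot j hj (hx j)

theorem reg_cdotMat {q : Fin m → WithBot ℝ} (hq : Reg q) {B : Matrix (Fin m) (Fin n) (WithBot ℝ)}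
    (hB : ∀ j, ∃ i, B i j ≠ ⊥) : Reg (cdotMat q B) := fun j =>
  have ⟨i, hi⟩ := hB j
  dot_ne_bot i (tinv_ne_bot (hq i)) hi

theorem cdot_le_add_cdot {u v : Fin m → WithBot ℝ} (hu : Reg u) (hv : Reg v) {c : WithBot ℝ}
    (h : ∀ i, u i ≤ c + v i) (p : Fin m → WithBot ℝ) : cdot v p ≤ c + cdot u p := by
  refine Finset.sup_le fun i _ => ?_
  calc tinv (v i) + p i ≤ c + tinv (u i) + p i :=
        add_le_add_left (tinv_le_add_tinv (hu i) (hv i) (h i)) _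
    _ = c + (tinv (u i) + p i) := add_assoc _ _ _
    _ ≤ c + cdot u p := add_le_add_right (add_le_dot (fun i => tinv (u i)) p i) c

theorem cdot_const_add (c : WithBot ℝ) (u p : Fin m → WithBot ℝ) :
    cdot (fun i => c + u i) p = tinv c + cdot u p := by
  simp only [cdot, tinv_add, add_assoc, ← add_finsetSup]

theorem cdot_mulVec_tinv_le {A : Matrix (Fin m) (Fin n) (WithBot ℝ)} (hA : ∀ i, ∃ j, A i j ≠ ⊥)
    {s : Fin n → WithBot ℝ} (hs : Reg s) (p : Fin m → WithBot ℝ) {x : Fin n → WithBot ℝ}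
    (hx : Reg x) :
    cdot (mulVec A fun j => tinv (s j)) p ≤ dot s x + cdot (mulVec A x) p := by
  have hx_le : x ≤ fun j => dot s x + tinv (s j) := le_dot_add_tinv hs x
  have hAx_le (i : Fin m) : mulVec A x i ≤ dot s x + mulVec A (fun j => tinv (s j)) i :=
    (dot_mono (A i) hx_le).trans_eq (dot_const_add _ _ _)
  exact cdot_le_add_cdot (reg_mulVec hA hx) (reg_mulVec hA fun j => tinv_ne_bot (hs j)) hAx_le p

theorem dot_add_cdot_mulVec_const_add_tinv {A : Matrix (Fin m) (Fin n) (WithBot ℝ)}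
    (hA : ∀ i, ∃ j, A i j ≠ ⊥) {s : Fin n → WithBot ℝ} (hs : Reg s) (p : Fin m → WithBot ℝ)
    {α : WithBot ℝ} (hα : α ≠ ⊥) :
    dot s (fun j => α + tinv (s j)) + cdot (mulVec A fun j => α + tinv (s j)) p =
      cdot (mulVec A fun j => tinv (s j)) p := by
  have hAα : (mulVec A fun j => α + tinv (s j)) = fun i => α + mulVec A (fun j => tinv (s j)) i :=
    funext fun i => dot_const_add _ _ _
  rw [hAα, cdot_const_add, ← add_assoc]
  rcases isEmpty_or_nonempty (Fin m) with hm | ⟨⟨i⟩⟩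
  · simp only [cdot, univ_eq_empty, sup_empty, WithBot.add_bot]
  · have : Nonempty (Fin n) := ⟨(hA i).choose⟩
    rw [dot_const_add_tinv hs, add_tinv_self hα, zero_add]

end Vectors

end MaxPlus

open MaxPlus

theorem stmt_4_general {m n : ℕ} (A B : Matrix (Fin m) (Fin n) (WithBot ℝ))
    (hA : ∀ i, ∃ j, A i j ≠ ⊥) (hB : ∀ j, ∃ i, B i j ≠ ⊥)
    (p : Fin m → WithBot ℝ)
    (q : Fin m → WithBot ℝ) (hq : Reg q)
    (Δ : WithBot ℝ)
    (hΔ : Δ = cdot (mulVec A (fun j => tinv (Finset.univ.sup fun i => tinv (q i) + B i j))) p) :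
    (∀ x : Fin n → WithBot ℝ, Reg x →
        Δ ≤ cdot q (mulVec B x) + cdot (mulVec A x) p) ∧
      ∀ α : ℝ,
        Reg (fun j => (α : WithBot ℝ) + tinv (Finset.univ.sup fun i => tinv (q i) + B i j)) ∧
        cdot q (mulVec B
              (fun j => (α : WithBot ℝ) + tinv (Finset.univ.sup fun i => tinv (q i) + B i j)))
            + cdot (mulVec A
              (fun j => (α : WithBot ℝ) + tinv (Finset.univ.sup fun i => tinv (q i) + B i j))) p
          = Δ := by
  subst hΔ
  have hs : Reg (cdotMat q B) := reg_cdotMat hq hB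
  refine ⟨fun x hx => ?_, fun α => ⟨?_, ?_⟩⟩
  · rw [cdot_mulVec]
    exact cdot_mulVec_tinv_le hA hs p hx
  · intro j
    exact WithBot.add_ne_bot.2 ⟨WithBot.coe_ne_bot, tinv_ne_bot (hs j)⟩
  · rw [cdot_mulVec]
    exact dot_add_cdot_mulVec_const_add_tinv hA hs p WithBot.coe_ne_bot

/-- unconstrained minimization of `q⁻ B x ⊗ (A x)⁻ p`. -/
theorem stmt_4 {m n : ℕ} (A B : Matrix (Fin m) (Fin n) (WithBot ℝ))
    (hA : ∀ i, ∃ j, A i j ≠ ⊥) (hB : ∀ j, ∃ i, B i j ≠ ⊥)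
    (p : Fin m → WithBot ℝ) (hp : ∃ i, p i ≠ ⊥)
    (q : Fin m → WithBot ℝ) (hq : Reg q)
    (Δ : WithBot ℝ)
    (hΔ : Δ = cdot (mulVec A (fun j => tinv (Finset.univ.sup fun i => tinv (q i) + B i j))) p) :
    (∀ x : Fin n → WithBot ℝ, Reg x →
        Δ ≤ cdot q (mulVec B x) + cdot (mulVec A x) p) ∧
      ∀ α : ℝ,
        Reg (fun j => (α : WithBot ℝ) + tinv (Finset.univ.sup fun i => tinv (q i) + B i j)) ∧
        cdot q (mulVec B
              (fun j => (α : WithBot ℝ) + tinv (Finset.univ.sup fun i => tinv (q i) + B i j)))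
            + cdot (mulVec A
              (fun j => (α : WithBot ℝ) + tinv (Finset.univ.sup fun i => tinv (q i) + B i j))) p
          = Δ :=
  stmt_4_general A B hA hB p q hq Δ hΔ
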